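/- Let G be a P5-free graph containing an induced 5-cycle C = v1...v5. If u,v ∈ S₄(i) are nonadjacent and s ∈ S¹₃(i) ∪ S₄(i+2) ∪ S₄(i−2), then s cannot be adjacent to exactly one of u, v. -/
import Mathlib


open SimpleGraph

/-- The chair: a `P₄` (0-1-2-3) with an extra vertex 4 adjacent to the middle vertex 2. -/
def chair : SimpleGraph (Fin 5) :=
  SimpleGraph.fromRel (fun a b => (a, b) ∈ [((0 : Fin 5), (1 : Fin 5)), (1, 2), (2, 3), (2, 4)])

/-- The cycle on five vertices. -/
def cycle5 : SimpleGraph (Fin 5) :=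
  SimpleGraph.fromRel (fun a b => b = a + 1)

/-- `G` contains an induced copy of `H`. -/
def HasInducedCopy {α V : Type*} (H : SimpleGraph α) (G : SimpleGraph V) : Prop :=
  ∃ f : α → V, Function.Injective f ∧ ∀ a b, G.Adj (f a) (f b) ↔ H.Adj a b

/-- `G` is `k`-vertex-critical. -/
def IsVertexCritical {V : Type*} (G : SimpleGraph V) (k : ℕ) : Prop :=
  G.chromaticNumber = k ∧ ∀ x : V, (G.induce {x}ᶜ).chromaticNumber < k

/-- `v : Fin 5 → V` is an induced five-cycle in `G`. -/
def IsInducedC5 {V : Type*} (G : SimpleGraph V) (v : Fin 5 → V) : Prop :=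
  Function.Injective v ∧ ∀ i j, G.Adj (v i) (v j) ↔ cycle5.Adj i j

/-- Vertices outside `C` whose neighbourhood on `C` is `{v (i-1), v i, v (i+1)}`. -/
def S13 {V : Type*} (G : SimpleGraph V) (v : Fin 5 → V) (i : Fin 5) : Set V :=
  {x | x ∉ Set.range v ∧ ∀ j, G.Adj x (v j) ↔ (j = i - 1 ∨ j = i ∨ j = i + 1)}

/-- Vertices outside `C` whose neighbourhood on `C` is `{v (i-2), v i, v (i+2)}`. -/
def S23 {V : Type*} (G : SimpleGraph V) (v : Fin 5 → V) (i : Fin 5) : Set V :=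
  {x | x ∉ Set.range v ∧ ∀ j, G.Adj x (v j) ↔ (j = i - 2 ∨ j = i ∨ j = i + 2)}

/-- Vertices outside `C` whose neighbourhood on `C` is all of `C` except `v i`. -/
def S4 {V : Type*} (G : SimpleGraph V) (v : Fin 5 → V) (i : Fin 5) : Set V :=
  {x | x ∉ Set.range v ∧ ∀ j, G.Adj x (v j) ↔ j ≠ i}

/-- Vertices outside `C` adjacent to all of `C`. -/
def S5 {V : Type*} (G : SimpleGraph V) (v : Fin 5 → V) : Set V :=
  {x | x ∉ Set.range v ∧ ∀ j, G.Adj x (v j)}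


lemma buildP5 {V : Type*} (G : SimpleGraph V) (a b c d e : V)
    (hab : G.Adj a b) (hbc : G.Adj b c) (hcd : G.Adj c d) (hde : G.Adj d e)
    (hac : ¬ G.Adj a c) (had : ¬ G.Adj a d) (hae : ¬ G.Adj a e)
    (hbd : ¬ G.Adj b d) (hbe : ¬ G.Adj b e) (hce : ¬ G.Adj c e) :
    ∃ f : Fin 5 → V, Function.Injective f ∧
      ∀ x y, G.Adj (f x) (f y) ↔ (pathGraph 5).Adj x y := by
  have hA : a ≠ b := hab.ne
  have hB : b ≠ c := hbc.ne
  have hC : c ≠ d := hcd.ne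
  have hD : d ≠ e := hde.ne
  have h1 : a ≠ c := fun h => had (h ▸ hcd)
  have h2 : a ≠ d := fun h => hae (h ▸ hde)
  have h3 : a ≠ e := fun h => had (h ▸ hde.symm)
  have h4 : b ≠ d := fun h => hbe (h ▸ hde)
  have h5 : b ≠ e := fun h => hae (h ▸ hab)
  have h6 : c ≠ e := fun h => hbe (h ▸ hbc)
  refine ⟨![a, b, c, d, e], ?_, ?_⟩
  · intro x y
    fin_cases x <;> fin_cases y <;>
      simp_all [hA.symm, hB.symm, hC.symm, hD.symm, h1.symm, h2.symm, h3.symm, h4.symm, h5.symm, h6.symm]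
  · have hba := hab.symm; have hcb := hbc.symm; have hdc := hcd.symm; have hed := hde.symm
    have hca : ¬ G.Adj c a := fun h => hac h.symm
    have hda : ¬ G.Adj d a := fun h => had h.symm
    have hea : ¬ G.Adj e a := fun h => hae h.symm
    have hdb : ¬ G.Adj d b := fun h => hbd h.symm
    have heb : ¬ G.Adj e b := fun h => hbe h.symm
    have hec : ¬ G.Adj e c := fun h => hce h.symm
    intro x y
    fin_cases x <;> fin_cases y <;>
      simp [pathGraph_adj, G.irrefl, hab, hbc, hcd, hde, hba, hcb, hdc, hed,
        hac, had, hae, hbd, hbe, hce, hca, hda, hea, hdb, heb, hec] <;> decide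

lemma cycle5_adj' (a b : Fin 5) : cycle5.Adj a b ↔ a ≠ b ∧ (b = a + 1 ∨ a = b + 1) := by
  simp [cycle5, SimpleGraph.fromRel_adj]

lemma finA : ∀ i : Fin 5, i + 2 ≠ i := by decide
lemma finB : ∀ i : Fin 5, i - 2 ≠ i := by decide
lemma finC : ∀ i : Fin 5, ¬ cycle5.Adj (i + 2) i := by simp only [cycle5_adj']; decide
lemma finD : ∀ i : Fin 5, ¬ cycle5.Adj i (i + 2) := by simp only [cycle5_adj']; decide
lemma finE : ∀ i : Fin 5, ¬ cycle5.Adj i (i - 2) := by simp only [cycle5_adj']; decide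
lemma finF : ∀ i : Fin 5, ¬(i + 2 = i - 1 ∨ i + 2 = i ∨ i + 2 = i + 1) := by decide
lemma finG : ∀ i : Fin 5, i ≠ i + 2 := by decide
lemma finH : ∀ i : Fin 5, i ≠ i - 2 := by decide

lemma keylem {V : Type*} (G : SimpleGraph V)
    (hP5 : ¬ HasInducedCopy (SimpleGraph.pathGraph 5) G)
    (v : Fin 5 → V) (hC : IsInducedC5 G v) (i : Fin 5)
    (u w : V) (hu : u ∈ S4 G v i) (hw : w ∈ S4 G v i)
    (hnadj : ¬ G.Adj u w)
    (s : V) (hs : s ∈ S13 G v i ∪ S4 G v (i + 2) ∪ S4 G v (i - 2))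
    (hsu : G.Adj s u) (hsw : ¬ G.Adj s w) : False := by
  obtain ⟨-, hu⟩ := hu
  obtain ⟨-, hw⟩ := hw
  have hC2 := hC.2
  -- cycle non-adjacency facts
  have c1 : ¬ G.Adj (v (i + 2)) (v i) := by rw [hC2]; exact finC i
  have c2 : ¬ G.Adj (v i) (v (i + 2)) := by rw [hC2]; exact finD i
  have c3 : ¬ G.Adj (v i) (v (i - 2)) := by rw [hC2]; exact finE i
  have e1 : i + 2 ≠ i := finA i
  have e2 : i - 2 ≠ i := finB i
  apply hP5
  rcases hs with (hs | hs) | hs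
  · -- s ∈ S13 i : path w, v(i+2), u, s, v i
    obtain ⟨-, hs⟩ := hs
    refine buildP5 G w (v (i + 2)) u s (v i) ?_ ?_ ?_ ?_ ?_ ?_ ?_ ?_ ?_ ?_
    · exact (hw (i + 2)).mpr e1
    · exact ((hu (i + 2)).mpr e1).symm
    · exact hsu.symm
    · exact (hs i).mpr (Or.inr (Or.inl rfl))
    · exact fun h => hnadj h.symm
    · exact fun h => hsw h.symm
    · exact fun h => (hw i).mp h rfl
    · exact fun h => finF i ((hs (i + 2)).mp h.symm)
    · exact c1
    · exact fun h => (hu i).mp h rfl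
  · -- s ∈ S4 (i+2) : path v i, s, u, v(i+2), w
    obtain ⟨-, hs⟩ := hs
    refine buildP5 G (v i) s u (v (i + 2)) w ?_ ?_ ?_ ?_ ?_ ?_ ?_ ?_ ?_ ?_
    · exact ((hs i).mpr (finG i)).symm
    · exact hsu
    · exact (hu (i + 2)).mpr e1
    · exact ((hw (i + 2)).mpr e1).symm
    · exact fun h => (hu i).mp h.symm rfl
    · exact c2
    · exact fun h => (hw i).mp h.symm rfl
    · exact fun h => (hs (i + 2)).mp h rfl
    · exact hsw
    · exact hnadj
  · -- s ∈ S4 (i-2) : path v i, s, u, v(i-2), w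
    obtain ⟨-, hs⟩ := hs
    refine buildP5 G (v i) s u (v (i - 2)) w ?_ ?_ ?_ ?_ ?_ ?_ ?_ ?_ ?_ ?_
    · exact ((hs i).mpr (finH i)).symm
    · exact hsu
    · exact (hu (i - 2)).mpr e2
    · exact ((hw (i - 2)).mpr e2).symm
    · exact fun h => (hu i).mp h.symm rfl
    · exact c3
    · exact fun h => (hw i).mp h.symm rfl
    · exact fun h => (hs (i - 2)).mp h rfl
    · exact hsw
    · exact hnadj

theorem stmt11 {V : Type*} [Fintype V] (G : SimpleGraph V)
    (hP5 : ¬ HasInducedCopy (SimpleGraph.pathGraph 5) G)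
    (v : Fin 5 → V) (hC : IsInducedC5 G v) (i : Fin 5)
    (u w : V) (hu : u ∈ S4 G v i) (hw : w ∈ S4 G v i)
    (hne : u ≠ w) (hnadj : ¬ G.Adj u w)
    (s : V) (hs : s ∈ S13 G v i ∪ S4 G v (i + 2) ∪ S4 G v (i - 2)) :
    (G.Adj s u ↔ G.Adj s w) := by
  constructor
  · intro h1
    by_contra h2
    exact keylem G hP5 v hC i u w hu hw hnadj s hs h1 h2
  · intro h1
    by_contra h2
    exact keylem G hP5 v hC i w u hw hu (fun h => hnadj h.symm) s hs h1 h2
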